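/- arXiv:2512.08119 — 2 statements merged into one kernel-verified Lean document; each statement's English description precedes it below -/
import Mathlib

section
/- Let q ∈ (0,1), let a ∈ ℂ be nonzero, let b,c,d ∈ ℂ, and let n ∈ ℤ≥0. Then for all x ∈ ℂ: (1 − abcd·q^{2n}) · (1 − a e^{ix})(1 − a e^{−ix}) · p_n(cos x; qa, b, c, d | q) = −a · p_{n+1}(cos x; a, b, c, d | q) + (1 − ab q^{n})(1 − ac q^{n})(1 − ad q^{n}) · p_n(cos x; a, b, c, d | q). -/
/-!
After the factor `a₁⁻ⁿ` is pulled out, the identity holds term by term in the terminating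
`₄φ₃` sums. Put `L = q⁻ⁿ (1 - abcd q²ⁿ)(1 - a e^{ix})(1 - a e^{-ix})` and
`C = (1 - ab qⁿ)(1 - ac qⁿ)(1 - ad qⁿ)`. For `k ≤ n`, `L` times the `k`-th term of
`p_n(qa, b, c, d)` is `C` times the `(k+1)`-st term of `p_n(a, b, c, d)` (zero for `k = n`)
minus the `(k+1)`-st term of `p_{n+1}(a, b, c, d)`, and the `0`-th terms of `p_{n+1}` and `p_n`
differ by the factor `C`. Each termwise identity becomes a rational identity once the Pochhammer
symbols of length `k + 1` are split as `(α;q)_{k+1} = (1 - α)(αq;q)_k = (α;q)_k (1 - α qᵏ)`.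
-/

open Complex Finset

/-- q-Pochhammer symbol `(a;q)_k = ∏_{j=0}^{k-1} (1 - a q^j)`. -/
noncomputable def qPoch (q a : ℂ) (k : ℕ) : ℂ := ∏ j ∈ Finset.range k, (1 - a * q ^ j)

/-- Askey–Wilson polynomial `p_n(cos x; a₁,a₂,a₃,a₄ | q)` as a function of `x ∈ ℂ`. -/
noncomputable def awPoly (q a₁ a₂ a₃ a₄ : ℂ) (n : ℕ) (x : ℂ) : ℂ :=
  a₁ ^ (-(n : ℤ)) * ∑ k ∈ Finset.range (n + 1),
    qPoch q (q ^ (-(n : ℤ))) k * qPoch q (a₁ * a₂ * a₃ * a₄ * q ^ ((n : ℤ) - 1)) k *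
      qPoch q (a₁ * Complex.exp (Complex.I * x)) k *
      qPoch q (a₁ * Complex.exp (-(Complex.I * x))) k * q ^ k / qPoch q q k *
      (qPoch q (a₁ * a₂ * q ^ k) (n - k) * qPoch q (a₁ * a₃ * q ^ k) (n - k) *
        qPoch q (a₁ * a₄ * q ^ k) (n - k))

@[simp] lemma qPoch_zero (q a : ℂ) : qPoch q a 0 = 1 := prod_range_zero _

lemma qPoch_succ (q a : ℂ) (k : ℕ) :
    qPoch q a (k + 1) = qPoch q a k * (1 - a * q ^ k) := prod_range_succ _ _

lemma qPoch_succ' (q a : ℂ) (k : ℕ) :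
    qPoch q a (k + 1) = (1 - a) * qPoch q (a * q) k := by
  simp only [qPoch, prod_range_succ', pow_zero, mul_one, pow_succ', mul_assoc, mul_comm _ (1 - a)]

lemma qPoch_ofReal_self_ne_zero {q : ℝ} (hq0 : 0 < q) (hq1 : q < 1) (k : ℕ) :
    qPoch (q : ℂ) q k ≠ 0 := by
  refine prod_ne_zero_iff.mpr fun j _ => ?_
  have hlt : q ^ (j + 1) < 1 := pow_lt_one₀ hq0.le hq1 j.succ_ne_zero
  rw [← pow_succ', ← ofReal_pow, ← ofReal_one, ← ofReal_sub, ofReal_ne_zero]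
  exact (sub_pos.mpr hlt).ne'

noncomputable def awTerm (q a b c d u v : ℂ) (n k : ℕ) : ℂ :=
  qPoch q (q ^ (-(n : ℤ))) k * qPoch q (a * b * c * d * q ^ ((n : ℤ) - 1)) k *
    qPoch q (a * u) k * qPoch q (a * v) k * q ^ k / qPoch q q k *
    (qPoch q (a * b * q ^ k) (n - k) * qPoch q (a * c * q ^ k) (n - k) *
      qPoch q (a * d * q ^ k) (n - k))

lemma awPoly_eq_sum_awTerm (q a b c d : ℂ) (n : ℕ) (x : ℂ) :
    awPoly q a b c d n x = a ^ (-(n : ℤ)) * ∑ k ∈ range (n + 1),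
      awTerm q a b c d (exp (I * x)) (exp (-(I * x))) n k := rfl

section ZPow

variable {G₀ : Type*} [GroupWithZero G₀] {q : G₀}

lemma zpow_neg_natCast_succ_mul (hq : q ≠ 0) (n : ℕ) :
    q ^ (-((n + 1 : ℕ) : ℤ)) * q = q ^ (-(n : ℤ)) := by
  rw [← zpow_add_one₀ hq]; push_cast; ring_nf

lemma zpow_natCast_succ_sub_one (q : G₀) (n : ℕ) : q ^ (((n + 1 : ℕ) : ℤ) - 1) = q ^ n := by
  rw [Nat.cast_succ, add_sub_cancel_right, zpow_natCast]

lemma zpow_natCast_sub_one_mul (hq : q ≠ 0) (n : ℕ) : q ^ ((n : ℤ) - 1) * q = q ^ n := by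
  rw [zpow_sub_one₀ hq, zpow_natCast, inv_mul_cancel_right₀ hq]

end ZPow

section ShiftRelation

variable {q : ℂ} (a b c d u v : ℂ)

lemma awTerm_succ_zero (n : ℕ) :
    awTerm q a b c d u v (n + 1) 0
      = (1 - a * b * q ^ n) * (1 - a * c * q ^ n) * (1 - a * d * q ^ n) *
          awTerm q a b c d u v n 0 := by
  simp only [awTerm, Nat.sub_zero, pow_zero, mul_one, qPoch_zero, qPoch_succ]
  ring

lemma awTerm_shift_self (hq : q ≠ 0) {n : ℕ} (hqq : qPoch q q (n + 1) ≠ 0) :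
    q ^ (-(n : ℤ)) * (1 - a * b * c * d * q ^ (2 * n)) * ((1 - a * u) * (1 - a * v)) *
      awTerm q (q * a) b c d u v n n
    = -awTerm q a b c d u v (n + 1) (n + 1) := by
  have hqa : q * a * b * c * d * q ^ ((n : ℤ) - 1) = a * b * c * d * q ^ n := by
    rw [← zpow_natCast_sub_one_mul hq n]; ring
  rw [qPoch_succ, mul_ne_zero_iff, mul_comm q (q ^ n)] at hqq
  simp only [awTerm, Nat.sub_self, qPoch_zero, mul_one, hqa, zpow_natCast_succ_sub_one]
  rw [qPoch_succ', zpow_neg_natCast_succ_mul hq, qPoch_succ, qPoch_succ' q (a * u),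
    qPoch_succ' q (a * v), qPoch_succ q q, mul_comm q a, mul_right_comm a q u, mul_right_comm a q v]
  simp only [zpow_neg, zpow_natCast]
  field_simp [hqq.1, hqq.2]
  ring

lemma awTerm_shift_of_lt (hq : q ≠ 0) {n k : ℕ} (hkn : k < n) (hqq : qPoch q q (k + 1) ≠ 0) :
    q ^ (-(n : ℤ)) * (1 - a * b * c * d * q ^ (2 * n)) * ((1 - a * u) * (1 - a * v)) *
      awTerm q (q * a) b c d u v n k
    = (1 - a * b * q ^ n) * (1 - a * c * q ^ n) * (1 - a * d * q ^ n) *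
        awTerm q a b c d u v n (k + 1)
      - awTerm q a b c d u v (n + 1) (k + 1) := by
  obtain ⟨m, hm⟩ : ∃ m, n = k + 1 + m := ⟨n - (k + 1), by omega⟩
  have hlen : n - k = m + 1 := by omega
  have hlen' : n + 1 - (k + 1) = m + 1 := by omega
  have hlen'' : n - (k + 1) = m := by omega
  have hqa : q * a * b * c * d * q ^ ((n : ℤ) - 1) = a * b * c * d * q ^ n := by
    rw [← zpow_natCast_sub_one_mul hq n]; ring
  have hqb : ∀ e, q * a * e * q ^ k = a * e * q ^ (k + 1) := fun e => by ring
  rw [qPoch_succ, mul_ne_zero_iff] at hqq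
  simp only [awTerm, hlen, hlen', hlen'', zpow_natCast_succ_sub_one]
  rw [qPoch_succ' q (q ^ (-((n + 1 : ℕ) : ℤ))), zpow_neg_natCast_succ_mul hq,
    qPoch_succ q (q ^ (-(n : ℤ))), qPoch_succ' q (a * b * c * d * q ^ ((n : ℤ) - 1)),
    mul_assoc _ (q ^ ((n : ℤ) - 1)), zpow_natCast_sub_one_mul hq,
    qPoch_succ q (a * b * c * d * q ^ n), hqa, hqb, hqb, hqb, mul_comm q a, mul_right_comm a q u,
    mul_right_comm a q v, qPoch_succ' q (a * u), qPoch_succ' q (a * v), qPoch_succ q q,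
    qPoch_succ q (a * b * q ^ (k + 1)), qPoch_succ q (a * c * q ^ (k + 1)),
    qPoch_succ q (a * d * q ^ (k + 1))]
  simp only [zpow_neg, zpow_natCast, zpow_sub_one₀ hq]
  field_simp [hqq.1, hqq.2]
  subst hm
  ring

theorem sum_awTerm_shift (hq : q ≠ 0) (hqq : ∀ k, qPoch q q k ≠ 0) (n : ℕ) :
    q ^ (-(n : ℤ)) * (1 - a * b * c * d * q ^ (2 * n)) * ((1 - a * u) * (1 - a * v)) *
      ∑ k ∈ range (n + 1), awTerm q (q * a) b c d u v n k
    = -∑ k ∈ range (n + 2), awTerm q a b c d u v (n + 1) k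
      + (1 - a * b * q ^ n) * (1 - a * c * q ^ n) * (1 - a * d * q ^ n) *
          ∑ k ∈ range (n + 1), awTerm q a b c d u v n k := by
  have hlower := sum_congr (s₁ := range n) rfl fun k hk =>
    awTerm_shift_of_lt a b c d u v hq (mem_range.mp hk) (hqq (k + 1))
  rw [mul_sum, sum_range_succ, hlower, awTerm_shift_self a b c d u v hq (hqq (n + 1)),
    sum_sub_distrib, ← mul_sum, sum_range_succ' _ (n + 1), sum_range_succ _ n,
    sum_range_succ' _ n, awTerm_succ_zero]
  ring

end ShiftRelation

/-- The single-parameter-shift relation (eq. `PhijPn=` of the paper) for the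
Askey–Wilson polynomials: shifting only the first parameter `a ↦ qa`. -/
theorem askey_wilson_one_parameter_shift
    (q : ℝ) (hq0 : 0 < q) (hq1 : q < 1)
    (a b c d : ℂ) (ha : a ≠ 0) (n : ℕ) (x : ℂ) :
    (1 - a * b * c * d * (q : ℂ) ^ (2 * n)) *
      ((1 - a * Complex.exp (Complex.I * x)) * (1 - a * Complex.exp (-(Complex.I * x)))) *
      awPoly (q : ℂ) ((q : ℂ) * a) b c d n x
    = -a * awPoly (q : ℂ) a b c d (n + 1) x
      + (1 - a * b * (q : ℂ) ^ n) * (1 - a * c * (q : ℂ) ^ n) * (1 - a * d * (q : ℂ) ^ n) *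
          awPoly (q : ℂ) a b c d n x := by
  have hq : (q : ℂ) ≠ 0 := ofReal_ne_zero.mpr hq0.ne'
  simp only [awPoly_eq_sum_awTerm, mul_zpow]
  linear_combination a ^ (-(n : ℤ)) *
      sum_awTerm_shift a b c d _ _ hq (qPoch_ofReal_self_ne_zero hq0 hq1) n
    + (∑ k ∈ range (n + 2), awTerm q a b c d (exp (I * x)) (exp (-(I * x))) (n + 1) k) *
      zpow_neg_natCast_succ_mul ha n
end

section
/- Let a ∈ ℂ, let φ ∈ ℝ with sin φ ≠ 0, and let n ∈ ℤ≥0. Then for all x ∈ ℂ: (a+ix)(a−ix) · P_n^{(a+1)}(x;φ) = (1/(4 sin²φ)) · [ (n+1)(n+2) P_{n+2}^{(a)}(x;φ) − 2 cos φ · (n+1)(2a+n+1) P_{n+1}^{(a)}(x;φ) + (2a+n)(2a+n+1) P_n^{(a)}(x;φ) ]. -/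
/-!
Write `y = a + ix`, `b = 2a`, `t = 1 - e^{-2iφ}`, so that `n! e^{-inφ} P_n^{(a)}(x;φ)` is the finite
sum `S_n(b, y) = Σ_k (-n)_k (b+k)_{n-k} / k! · (y)_k t^k`. Two contiguous relations, each a termwise
identity between Pochhammer symbols,
  `S_{n+1}(b, y) - (b+n) S_n(b, y) = -t y S_n(b+1, y+1)` and
  `y S_n(b+1, y+1) - (b+n) S_n(b, y) = (y-b) S_n(b+1, y)`,
combine into a three-term relation between `S_{n+2}, S_{n+1}, S_n` and `t² y (y-b) S_n(b+2, y+1)`.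
With `E = e^{iφ}` one has `1 - t = E⁻²`, `2 cos φ = E + E⁻¹` and `4 sin² φ = -(E⁻¹ - E)²`,
which turns the three-term relation into the Christoffel formula.
-/

open Complex Finset

/-- Rising Pochhammer symbol `(x)_m = x (x+1) ⋯ (x+m-1)`. -/
noncomputable def poch (x : ℂ) (m : ℕ) : ℂ := ∏ j ∈ Finset.range m, (x + j)

/-- Meixner–Pollaczek polynomial `P_n^{(a)}(x;φ)` as a function of `x ∈ ℂ`. -/
noncomputable def mpPoly (a : ℂ) (φ : ℝ) (n : ℕ) (x : ℂ) : ℂ :=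
  Complex.exp (n * Complex.I * φ) / (n.factorial : ℂ) *
    ∑ k ∈ Finset.range (n + 1),
      poch (-(n : ℂ)) k * poch (a + Complex.I * x) k * poch (2 * a + k) (n - k) /
        (k.factorial : ℂ) * (1 - Complex.exp (-(2 * Complex.I * φ))) ^ k

lemma poch_zero (x : ℂ) : poch x 0 = 1 :=
  prod_range_zero _

lemma poch_succ (x : ℂ) (m : ℕ) : poch x (m + 1) = poch x m * (x + m) :=
  prod_range_succ _ _

lemma poch_succ' (x : ℂ) (m : ℕ) : poch x (m + 1) = x * poch (x + 1) m := by
  induction m with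
  | zero => simp [poch]
  | succ m ih =>
    rw [poch_succ, ih, poch_succ, mul_assoc]
    push_cast
    ring

lemma poch_neg_natCast_eq_zero_of_lt {n m : ℕ} (h : n < m) : poch (-n) m = 0 :=
  prod_eq_zero (mem_range.mpr h) (by simp)

noncomputable def mpCoeff (b : ℂ) (n k : ℕ) : ℂ :=
  poch (-n) k * poch (b + k) (n - k) / k.factorial

lemma mpCoeff_eq_zero_of_lt {n k : ℕ} (b : ℂ) (h : n < k) : mpCoeff b n k = 0 := by
  simp [mpCoeff, poch_neg_natCast_eq_zero_of_lt h]

lemma mpCoeff_succ_zero (b : ℂ) (n : ℕ) : mpCoeff b (n + 1) 0 = (b + n) * mpCoeff b n 0 := by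
  simp [mpCoeff, poch_succ, poch_zero, mul_comm]

lemma mpCoeff_succ_succ_sub (b : ℂ) (n k : ℕ) :
    mpCoeff b (n + 1) (k + 1) - (b + n) * mpCoeff b n (k + 1) = -mpCoeff (b + 1) n k := by
  have hk : ((k + 1).factorial : ℂ) = (k + 1) * k.factorial := by push_cast [Nat.factorial_succ]; rfl
  have hk1 : (k : ℂ) + 1 ≠ 0 := by exact_mod_cast k.succ_ne_zero
  have hpoch : poch (-(n + 1 : ℕ)) (k + 1) = -(n + 1) * poch (-n) k := by
    rw [poch_succ']; push_cast; ring_nf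
  have hb : b + 1 + (k : ℂ) = b + (k + 1 : ℕ) := by push_cast; ring
  rcases lt_trichotomy k n with h | rfl | h
  · obtain ⟨r, rfl⟩ := Nat.exists_eq_add_of_lt h
    simp only [mpCoeff, hpoch, hk, hb, show k + r + 1 + 1 - (k + 1) = r + 1 by omega,
      show k + r + 1 - (k + 1) = r by omega, show k + r + 1 - k = r + 1 by omega, poch_succ]
    field_simp
    push_cast
    ring
  · rw [mpCoeff_eq_zero_of_lt b k.lt_succ_self]
    simp only [mpCoeff, hpoch, Nat.sub_self, poch_zero, hk]
    field_simp
    simp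
  · rw [mpCoeff_eq_zero_of_lt _ h, mpCoeff_eq_zero_of_lt _ (by omega), mpCoeff_eq_zero_of_lt _ (by omega)]
    ring

lemma add_mul_mpCoeff_add_one (b : ℂ) (n k : ℕ) :
    (b + k) * mpCoeff (b + 1) n k = (b + n) * mpCoeff b n k := by
  rcases le_or_gt k n with h | h
  · obtain ⟨r, rfl⟩ := Nat.exists_eq_add_of_le h
    have hpoch : (b + k) * poch (b + 1 + k) r = poch (b + k) r * (b + (k + r : ℕ)) := by
      rw [add_right_comm, ← poch_succ', poch_succ]
      push_cast; ring
    simp only [mpCoeff, Nat.add_sub_cancel_left]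
    linear_combination poch (-(k + r : ℕ)) k / k.factorial * hpoch
  · simp [mpCoeff_eq_zero_of_lt _ h]

noncomputable def mpSum (b y t : ℂ) (n : ℕ) : ℂ :=
  ∑ k ∈ range (n + 1), mpCoeff b n k * poch y k * t ^ k

lemma mpPoly_eq_mpSum (a : ℂ) (φ : ℝ) (n : ℕ) (x : ℂ) :
    mpPoly a φ n x = exp (n * I * φ) / n.factorial *
      mpSum (2 * a) (a + I * x) (1 - exp (-(2 * I * φ))) n := by
  simp only [mpPoly, mpSum, mpCoeff]
  congr 1
  refine sum_congr rfl fun k _ => ?_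
  ring

lemma mpSum_succ_sub (b y t : ℂ) (n : ℕ) :
    mpSum b y t (n + 1) - (b + n) * mpSum b y t n = -(t * y * mpSum (b + 1) (y + 1) t n) := by
  have hext : mpSum b y t n = ∑ k ∈ range (n + 2), mpCoeff b n k * poch y k * t ^ k := by
    rw [mpSum, sum_range_succ _ (n + 1), mpCoeff_eq_zero_of_lt b n.lt_succ_self]
    ring
  rw [hext, mpSum, mpSum, mul_sum, mul_sum, ← sum_sub_distrib, sum_range_succ', ← sum_neg_distrib]
  simp only [mpCoeff_succ_zero, mul_assoc, sub_self, add_zero]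
  refine sum_congr rfl fun k _ => ?_
  linear_combination poch y (k + 1) * t ^ (k + 1) * mpCoeff_succ_succ_sub b n k
    - mpCoeff (b + 1) n k * t ^ (k + 1) * poch_succ' y k

lemma mul_mpSum_add_one_sub (b y t : ℂ) (n : ℕ) :
    y * mpSum (b + 1) (y + 1) t n - (b + n) * mpSum b y t n = (y - b) * mpSum (b + 1) y t n := by
  simp only [mpSum, mul_sum, ← sum_sub_distrib]
  refine sum_congr rfl fun k _ => ?_
  linear_combination -mpCoeff (b + 1) n k * t ^ k * (poch_succ y k).symm.trans (poch_succ' y k)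
    + poch y k * t ^ k * add_mul_mpCoeff_add_one b n k

lemma mpSum_three_term (b y t : ℂ) (n : ℕ) :
    mpSum b y t (n + 2) - (2 - t) * (b + n + 1) * mpSum b y t (n + 1)
      + (1 - t) * (b + n) * (b + n + 1) * mpSum b y t n
      = t ^ 2 * y * (y - b) * mpSum (b + 2) (y + 1) t n := by
  have h0 := mpSum_succ_sub b y t n
  have h1 := mpSum_succ_sub b y t (n + 1)
  have h2 := mpSum_succ_sub (b + 1) (y + 1) t n
  have h3 := mul_mpSum_add_one_sub (b + 1) (y + 1) t n
  rw [add_assoc b 1 1, one_add_one_eq_two] at h2 h3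
  push_cast at h1
  linear_combination h1 - (1 - t) * (b + n + 1) * h0 - t * y * h2 + t ^ 2 * y * h3

lemma two_cos_eq_exp_add_inv (z : ℂ) : 2 * cos z = exp (z * I) + (exp (z * I))⁻¹ := by
  rw [two_cos, ← exp_neg, neg_mul]

lemma four_sin_sq_eq_neg_sq (z : ℂ) : 4 * sin z ^ 2 = -((exp (z * I))⁻¹ - exp (z * I)) ^ 2 := by
  rw [show 4 * sin z ^ 2 = (2 * sin z) ^ 2 by ring, two_sin, ← exp_neg, neg_mul, mul_pow, I_sq]
  ring

lemma exp_neg_two_mul_I (z : ℂ) : exp (-(2 * I * z)) = (exp (z * I))⁻¹ ^ 2 := by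
  rw [← exp_neg, ← exp_nat_mul]
  ring_nf

/-- Eq. (21) of Ismail–Saad for the Meixner–Pollaczek polynomials (the Christoffel
relation `Φ̌ P̌_n(·;λ+2δ) = β_n Σ_k α_{n,k} P̌_{n+k}(·;λ)` of the paper). -/
theorem meixner_pollaczek_christoffel
    (a : ℂ) (φ : ℝ) (hφ : Real.sin φ ≠ 0) (n : ℕ) (x : ℂ) :
    (a + Complex.I * x) * (a - Complex.I * x) * mpPoly (a + 1) φ n x
    = 1 / (4 * (Real.sin φ : ℂ) ^ 2) *
        (((n : ℂ) + 1) * ((n : ℂ) + 2) * mpPoly a φ (n + 2) x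
          - 2 * (Real.cos φ : ℂ) * ((n : ℂ) + 1) * (2 * a + n + 1) * mpPoly a φ (n + 1) x
          + (2 * a + n) * (2 * a + n + 1) * mpPoly a φ n x) := by
  have h4 : 4 * (Real.sin φ : ℂ) ^ 2 ≠ 0 :=
    mul_ne_zero (by norm_num) (pow_ne_zero 2 (ofReal_ne_zero.mpr hφ))
  have hpow (m : ℕ) : exp (m * I * φ) = exp (φ * I) ^ m := by rw [← exp_nat_mul]; ring_nf
  rw [eq_comm, one_div_mul_eq_div, div_eq_iff h4, ofReal_cos, ofReal_sin, two_cos_eq_exp_add_inv,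
    four_sin_sq_eq_neg_sq]
  simp only [mpPoly_eq_mpSum, hpow, exp_neg_two_mul_I]
  have key := mpSum_three_term (2 * a) (a + I * x) (1 - (exp (φ * I))⁻¹ ^ 2) n
  have hE : exp (φ * I) ≠ 0 := exp_ne_zero _
  -- keeps `field_simp` from rewriting `exp (φ * I)` inside the arguments of `mpSum`
  generalize exp (φ * I) = E at *
  rw [show 2 * (a + 1) = 2 * a + 2 by ring, show a + 1 + I * x = a + I * x + 1 by ring]
  have hn : (n : ℂ) + 1 + 1 ≠ 0 := by exact_mod_cast (n + 1).succ_ne_zero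
  rw [Nat.factorial_succ, Nat.factorial_succ]
  push_cast
  field_simp at key ⊢
  linear_combination ((n : ℂ) + 2) * E ^ n / n.factorial * key
end
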